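/- arXiv:2011.02409 — 3 statements merged into one kernel-verified Lean document; each statement's English description precedes it below -/
import Mathlib

section
/- Let X be a finite T₀ topological space and let f, g be homeomorphisms of X. Then f is isotopic to g if and only if f = g. Consequently, the mapping class group of X coincides with its full homeomorphism group. -/
/-
In a T₀ space specialization is a partial order, and a finite-order permutation `e` with
`e x ⤳ x` for all `x` must be the identity, since `x = eⁿ x ⤳ e x ⤳ x`. In a finite space
every point has a smallest neighbourhood, so along a continuous family of homeomorphisms
`H(·, s) ⤳ H(·, t)` for `s` near `t`, which forces `H(·, s) = H(·, t)`. The family is thus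
locally constant on the connected interval `[0,1]`, and isotopic homeomorphisms coincide.
-/

open unitInterval

/-- An isotopy between homeomorphisms `f` and `g` of `X`: a continuous map
`H : X × [0,1] → X` with `H(·,0) = f`, `H(·,1) = g`, and `H(·,t)` a
homeomorphism for every `t`. -/
def Isotopy {X : Type*} [TopologicalSpace X] (f g : X ≃ₜ X) : Prop :=
  ∃ H : X × I → X, Continuous H ∧
    (∀ x, H (x, 0) = f x) ∧
    (∀ x, H (x, 1) = g x) ∧
    ∀ t : I, ∃ h : X ≃ₜ X, ∀ x, H (x, t) = h x

open Filter Topology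

theorem Function.iterate_specializes {X : Type*} [TopologicalSpace X] {f : X → X}
    (hf : ∀ x, f x ⤳ x) (n : ℕ) (x : X) : f^[n] x ⤳ x := by
  induction n generalizing x with
  | zero => rfl
  | succ n ih => exact (ih (f x)).trans (hf x)

theorem Equiv.Perm.apply_eq_self_of_forall_specializes {X : Type*} [TopologicalSpace X]
    [Finite X] [T0Space X] (e : Equiv.Perm X) (he : ∀ x, e x ⤳ x) (x : X) : e x = x := by
  obtain ⟨n, hn⟩ := Nat.exists_eq_add_one_of_ne_zero (isOfFinOrder_of_finite e).orderOf_pos.ne'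
  have hperiod : e^[n] (e x) = x := by
    rw [← Function.iterate_succ_apply, Nat.succ_eq_add_one, ← hn, ← Equiv.Perm.coe_pow,
      pow_orderOf_eq_one]
    rfl
  have hx : e^[n] (e x) ⤳ e x := Function.iterate_specializes he n (e x)
  rw [hperiod] at hx
  exact ((he x).antisymm hx).eq

theorem Homeomorph.ext_of_forall_specializes {X : Type*} [TopologicalSpace X] [Finite X]
    [T0Space X] {f g : X ≃ₜ X} (h : ∀ x, f x ⤳ g x) : f = g := by
  ext x
  refine g.symm_apply_eq.1 ?_
  refine Equiv.Perm.apply_eq_self_of_forall_specializes (f.trans g.symm).toEquiv (fun y => ?_) x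
  simpa using (h y).map g.symm.continuous

theorem AlexandrovDiscrete.eventually_specializes {X : Type*} [TopologicalSpace X]
    [AlexandrovDiscrete X] (x : X) : ∀ᶠ y in 𝓝 x, y ⤳ x :=
  nhdsKer_singleton_subset_iff_mem_nhds.1 fun _ => mem_nhdsKer_singleton.1

theorem isLocallyConstant_of_continuous_of_forall_homeomorph {T X : Type*} [TopologicalSpace T]
    [TopologicalSpace X] [Finite X] [T0Space X] {F : T → X → X} (hF : Continuous F)
    (hhomeo : ∀ t, ∃ h : X ≃ₜ X, F t = h) : IsLocallyConstant F := by
  refine (IsLocallyConstant.iff_eventually_eq F).2 fun t => ?_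
  have hspec : ∀ᶠ s in 𝓝 t, ∀ x, F s x ⤳ F t x := eventually_all.2 fun x =>
    ((continuous_apply x).comp hF).continuousAt.eventually
      (AlexandrovDiscrete.eventually_specializes _)
  filter_upwards [hspec] with s hs
  obtain ⟨h, hh⟩ := hhomeo s
  obtain ⟨h', hh'⟩ := hhomeo t
  rw [hh, hh'] at hs ⊢
  rw [Homeomorph.ext_of_forall_specializes hs]

theorem Isotopy.refl {X : Type*} [TopologicalSpace X] (f : X ≃ₜ X) : Isotopy f f :=
  ⟨fun p => f p.1, f.continuous.comp continuous_fst, fun _ => rfl, fun _ => rfl,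
    fun _ => ⟨f, fun _ => rfl⟩⟩

theorem Isotopy.eq {X : Type*} [TopologicalSpace X] [Finite X] [T0Space X] {f g : X ≃ₜ X}
    (hfg : Isotopy f g) : f = g := by
  obtain ⟨H, hH, h0, h1, hhomeo⟩ := hfg
  have hconst : IsLocallyConstant fun t x => H (x, t) :=
    isLocallyConstant_of_continuous_of_forall_homeomorph
      (continuous_pi fun x => hH.comp (Continuous.prodMk_right x))
      fun t => (hhomeo t).imp fun _ h => funext h
  ext x
  rw [← h0, ← h1]
  exact congrFun (hconst.apply_eq_of_preconnectedSpace 0 1) x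

theorem isotopy_iff_eq {X : Type*} [TopologicalSpace X] [Finite X] [T0Space X]
    {f g : X ≃ₜ X} : Isotopy f g ↔ f = g :=
  ⟨Isotopy.eq, by rintro rfl; exact Isotopy.refl f⟩

/-- For a finite T₀ space `X`, two homeomorphisms are isotopic iff
they are equal; consequently the quotient map from the homeomorphism group to
the mapping class group is a bijection. -/
theorem stmt_6 {X : Type*} [TopologicalSpace X] [Finite X] [T0Space X] :
    (∀ f g : X ≃ₜ X, Isotopy f g ↔ f = g) ∧
    Function.Bijective (Quot.mk (Isotopy (X := X))) := by
  refine ⟨fun f g => isotopy_iff_eq, fun f g hfg => ?_, Quot.exists_rep⟩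
  exact eq_equivalence.eqvGen_iff.1 ((Quot.eq.1 hfg).mono fun _ _ => Isotopy.eq)
end

section
/- Let P be a partially ordered set equipped with the lower-set (Alexandrov) topology, in which a set is open if and only if it is a lower set. Assume that every element of P has finite height, and that every down-equivalence class of P is countable, where a, a′ ∈ P are down-equivalent if for all b ∈ P one has b < a if and only if b < a′. Then any two homeomorphisms of P are isotopic if and only if they are equal. -/
open unitInterval

/-- Let `P` be a poset with the lower-set topology, in which every
element has finite height and every down-equivalence class is countable.  Then
two homeomorphisms of `P` are isotopic iff they are equal. -/
theorem stmt_7 {P : Type*} [PartialOrder P] [TopologicalSpace P]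
    (hop : ∀ s : Set P, IsOpen s ↔ IsLowerSet s)
    (hht : ∀ a : P, Order.height a ≠ ⊤)
    (hcount : ∀ a : P, {a' : P | ∀ b : P, b < a' ↔ b < a}.Countable) :
    ∀ f g : P ≃ₜ P, Isotopy f g ↔ f = g := by
  intro f g
  constructor
  · rintro ⟨H, hcont, h0, h1, hhomeo⟩
    -- every homeomorphism is monotone
    have key : ∀ (h : P ≃ₜ P) {x y : P}, x ≤ y → h x ≤ h y := by
      intro h x y hxy
      have hU : IsOpen {p : P | p ≤ h y} :=
        (hop _).2 (fun a b hba ha => le_trans hba ha)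
      have hpre : IsOpen (h ⁻¹' {p | p ≤ h y}) := hU.preimage h.continuous
      have hl := (hop _).1 hpre
      have hyU : y ∈ h ⁻¹' {p | p ≤ h y} := by simp
      exact hl hxy hyU
    -- every homeomorphism preserves height
    have hiso : ∀ (h : P ≃ₜ P) (x : P), Order.height (h x) = Order.height x := by
      intro h x
      let e : P ≃o P :=
        { h.toEquiv with
          map_rel_iff' := by
            intro a b
            constructor
            · intro hab
              have := key h.symm hab
              simpa using this
            · intro hab
              exact key h hab }
      exact Order.height_orderIso e x
    -- fix x and consider the path
    have hfg : ∀ x : P, f x = g x := by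
      intro x
      set γ : I → P := fun t => H (x, t) with hγ
      have hγc : Continuous γ := hcont.comp (by continuity)
      have hconst : ∀ t : I, Order.height (γ t) = Order.height x := by
        intro t
        obtain ⟨h, hh⟩ := hhomeo t
        rw [show γ t = h x from hh x]
        exact hiso h x
      -- level sets of γ are open
      have hopenlevel : ∀ t : I, IsOpen {s : I | γ s = γ t} := by
        intro t
        have hset : {s : I | γ s = γ t} = γ ⁻¹' {p | p ≤ γ t} := by
          ext s
          simp only [Set.mem_setOf_eq, Set.mem_preimage]
          constructor
          · intro hst; exact le_of_eq hst
          · intro hle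
            rcases lt_or_eq_of_le hle with hlt | heq
            · exfalso
              have hfin : Order.height (γ s) < ⊤ :=
                lt_top_iff_ne_top.mpr (by rw [hconst s]; exact hht x)
              have := Order.height_strictMono hlt hfin
              rw [hconst s, hconst t] at this
              exact lt_irrefl _ this
            · exact heq
        rw [hset]
        exact (((hop _).2 (fun a b hba ha => le_trans hba ha)).preimage hγc)
      have hclopen : IsClopen {s : I | γ s = γ 0} := by
        constructor
        · rw [← isOpen_compl_iff]
          have hcompl : {s : I | γ s = γ 0}ᶜ = ⋃ t ∈ {t : I | γ t ≠ γ 0}, {s | γ s = γ t} := by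
            ext s
            simp only [Set.mem_compl_iff, Set.mem_setOf_eq, Set.mem_iUnion]
            constructor
            · intro hs; exact ⟨s, hs, rfl⟩
            · rintro ⟨t, ht, hst⟩; rw [hst]; exact ht
          rw [hcompl]
          exact isOpen_biUnion (fun t _ => hopenlevel t)
        · exact hopenlevel 0
      have huniv : {s : I | γ s = γ 0} = Set.univ :=
        hclopen.eq_univ ⟨0, rfl⟩
      have h10 : γ 1 = γ 0 := by
        have : (1 : I) ∈ {s : I | γ s = γ 0} := huniv ▸ Set.mem_univ _
        exact this
      have := h10
      rw [show γ 1 = g x from h1 x, show γ 0 = f x from h0 x] at this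
      exact this.symm
    ext x
    exact hfg x
  · rintro rfl
    exact ⟨fun p => f p.1, f.continuous.comp continuous_fst,
      fun x => rfl, fun x => rfl, fun t => ⟨f, fun x => rfl⟩⟩
end

section
/- Let P be the poset ℕ ∪ {⊥} with ⊥ < n for every n ∈ ℕ and distinct natural numbers incomparable, equipped with the lower-set topology (opens = lower sets). Then any homeomorphism of P that is isotopic to the identity is equal to the identity; more generally, two homeomorphisms of P are isotopic if and only if they are equal. -/
open unitInterval

/-- `ℕ` with the trivial partial order (`a ≤ b` iff `a = b`). -/
def TrivNat : Type := ℕ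

instance : PartialOrder TrivNat where
  le a b := a = b
  le_refl _ := rfl
  le_trans _ _ _ := Eq.trans
  le_antisymm _ _ h _ := h

/-- In `P = ℕ ∪ {⊥}` (with `⊥ < n` for all `n`, distinct naturals
incomparable) with the lower-set topology, a homeomorphism isotopic to the
identity is the identity; more generally two homeomorphisms are isotopic iff
they are equal. -/
theorem stmt_14 [TopologicalSpace (WithBot TrivNat)]
    (hop : ∀ s : Set (WithBot TrivNat), IsOpen s ↔ IsLowerSet s) :
    (∀ f : WithBot TrivNat ≃ₜ WithBot TrivNat,
        Isotopy f (Homeomorph.refl (WithBot TrivNat)) →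
        f = Homeomorph.refl (WithBot TrivNat)) ∧
    (∀ f g : WithBot TrivNat ≃ₜ WithBot TrivNat, Isotopy f g ↔ f = g) := by
  have key : ∀ f g : WithBot TrivNat ≃ₜ WithBot TrivNat, Isotopy f g → f = g := by
    intro f g ⟨H, Hcont, H0, H1, Hh⟩
    have fixbot : ∀ h : WithBot TrivNat ≃ₜ WithBot TrivNat, h ⊥ = ⊥ := by
      intro h
      have hopen : IsOpen {(⊥ : WithBot TrivNat)} := (hop _).mpr (by
        intro a b hle ha
        simp only [Set.mem_singleton_iff] at ha ⊢
        subst ha; exact le_bot_iff.mp hle)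
      have himg : IsOpen (h '' {⊥}) := h.isOpenMap _ hopen
      rw [Set.image_singleton] at himg
      have hlow := (hop _).mp himg
      have hb : (⊥ : WithBot TrivNat) ∈ ({h ⊥} : Set _) :=
        hlow (show (⊥ : WithBot TrivNat) ≤ h ⊥ from bot_le) rfl
      exact (Set.mem_singleton_iff.mp hb).symm
    apply Homeomorph.ext
    intro x
    have hx1 : g x = H (x, 1) := (H1 x).symm
    have hx0 : f x = H (x, 0) := (H0 x).symm
    rcases x with _ | n
    · -- x = ⊥
      show f ⊥ = g ⊥
      rw [fixbot f, fixbot g]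
    · set x : WithBot TrivNat := (n : WithBot TrivNat) with hxdef
      have xne : x ≠ ⊥ := WithBot.coe_ne_bot
      set c : I → WithBot TrivNat := fun t => H (x, t) with hcdef
      have ccont : Continuous c := Hcont.comp (Continuous.prodMk_right x)
      have cne : ∀ t, c t ≠ ⊥ := by
        intro t hbot
        obtain ⟨h, hh⟩ := Hh t
        have : h x = ⊥ := by rw [← hh x]; exact hbot
        have : h x = h ⊥ := by rw [this, fixbot h]
        exact xne (h.injective this)
      obtain ⟨m, hm⟩ : ∃ m : TrivNat, c 0 = (m : WithBot TrivNat) := by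
        rcases h : c 0 with _ | m
        · exact absurd h (cne 0)
        · exact ⟨m, rfl⟩
      have memiff : ∀ y : WithBot TrivNat, (m : WithBot TrivNat) ≤ y → y = (m : WithBot TrivNat) := by
        intro y hy
        rcases y with _ | k
        · exact absurd (le_bot_iff.mp hy) WithBot.coe_ne_bot
        · obtain hk := WithBot.coe_le_coe.mp hy
          exact congrArg _ hk.symm
      have hclosed : IsClosed (c ⁻¹' {(m : WithBot TrivNat)}) := by
        refine IsClosed.preimage ccont ?_
        rw [← isOpen_compl_iff]
        refine (hop _).mpr ?_
        intro a b hle ha hb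
        simp only [Set.mem_compl_iff, Set.mem_singleton_iff] at ha hb
        exact ha (memiff a (hb ▸ hle))
      have hpair : IsOpen ({(m : WithBot TrivNat), ⊥} : Set (WithBot TrivNat)) := by
        refine (hop _).mpr ?_
        intro a b hle ha
        rcases ha with ha | ha
        · rcases b with _ | k
          · exact Or.inr rfl
          · left
            subst ha
            exact congrArg _ (WithBot.coe_le_coe.mp hle)
        · simp only [Set.mem_singleton_iff] at ha
          subst ha
          exact Or.inr (le_bot_iff.mp hle)
      have heq : c ⁻¹' {(m : WithBot TrivNat)} = c ⁻¹' {(m : WithBot TrivNat), ⊥} := by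
        ext t
        simp only [Set.mem_preimage, Set.mem_singleton_iff, Set.mem_insert_iff]
        exact ⟨Or.inl, fun h => h.resolve_right (cne t)⟩
      have hopen' : IsOpen (c ⁻¹' {(m : WithBot TrivNat)}) := by
        rw [heq]; exact hpair.preimage ccont
      have hclopen : IsClopen (c ⁻¹' {(m : WithBot TrivNat)}) := ⟨hclosed, hopen'⟩
      have huniv : c ⁻¹' {(m : WithBot TrivNat)} = Set.univ :=
        hclopen.eq_univ ⟨0, hm⟩
      have h1 : c 1 = (m : WithBot TrivNat) := by
        have : (1 : I) ∈ c ⁻¹' {(m : WithBot TrivNat)} := huniv ▸ Set.mem_univ _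
        exact this
      rw [hx1, hx0]
      show c 0 = c 1
      rw [h1, hm]
  constructor
  · intro f hf
    exact key _ _ hf
  · intro f g
    constructor
    · exact key f g
    · rintro rfl
      exact ⟨fun p => f p.1, f.continuous.comp continuous_fst,
        fun x => rfl, fun x => rfl, fun t => ⟨f, fun x => rfl⟩⟩
end
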